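/- arXiv:1901.01147 — 2 statements merged into one kernel-verified Lean document; each statement's English description precedes it below -/
import Mathlib

section
/- Let f : [a,b] → ℝ be Hölder continuous of order r ∈ (0,1] with constant H, and u : [a,b] → ℝ of bounded variation. Then for all y ∈ [a, (a+b)/2], |∫ₐᵇ f du − [u((a+b)/2) − u(a)]·f(y) − [u(b) − u((a+b)/2)]·f(a+b−y)| ≤ H · ((b−a)/4 + |y − (3a+b)/4|)^r · V(u;[a,b]). -/
/-- A tagged partition of the interval `[a, b]`. -/
structure TaggedPartition (a b : ℝ) where
  n : ℕ
  pts : ℕ → ℝ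
  tag : ℕ → ℝ
  mono : ∀ i, pts i ≤ pts (i + 1)
  first : pts 0 = a
  last : pts n = b
  tag_mem : ∀ i, pts i ≤ tag i ∧ tag i ≤ pts (i + 1)

/-- The Riemann–Stieltjes sum of `f` with respect to `u` over a tagged partition. -/
def RSsum (f u : ℝ → ℝ) {a b : ℝ} (P : TaggedPartition a b) : ℝ :=
  ∑ i ∈ Finset.range P.n, f (P.tag i) * (u (P.pts (i + 1)) - u (P.pts i))

/-- `IsRSIntegral f u a b I` means the Riemann–Stieltjes integral `∫ₐᵇ f du` exists
and equals `I`: Riemann–Stieltjes sums converge to `I` as the mesh tends to `0`. -/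
def IsRSIntegral (f u : ℝ → ℝ) (a b I : ℝ) : Prop :=
  ∀ ε > 0, ∃ δ > 0, ∀ P : TaggedPartition a b,
    (∀ i < P.n, P.pts (i + 1) - P.pts i < δ) → |RSsum f u P - I| < ε

/-- The total (Jordan) variation of `u` on `[a, b]`. -/
noncomputable def totalVar (u : ℝ → ℝ) (a b : ℝ) : ℝ :=
  (eVariationOn u (Set.Icc a b)).toReal

/-!
On a tagged partition of `[a, b]` having the midpoint `m` as a node, the Riemann–Stieltjes sum
differs from `f y · (u m - u a) + f (a + b - y) · (u b - u m)` by `∑ (f (ξᵢ) - cᵢ) Δᵢu`, where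
`cᵢ` is `f y` on `[a, m]` and `f (a + b - y)` on `[m, b]`. Every tag of `[a, m]` lies within
`(b - a) / 4 + |y - (3a + b) / 4|` of `y` (the radius plus the distance of `y` to the centre of
`[a, m]`), and by the symmetry `t ↦ a + b - t` the same holds on `[m, b]` for `a + b - y`. Hölder
continuity bounds each `|f (ξᵢ) - cᵢ|` by `H` times the `r`-th power of that distance, and
`∑ |Δᵢu| ≤ V(u; [a, b])`. Uniform partitions into an even number of pieces have the midpoint as
a node and arbitrarily small mesh, so the bound passes to the integral.
-/

open Finset

namespace TaggedPartition

variable {a b : ℝ} (P : TaggedPartition a b)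

lemma pts_monotone : Monotone P.pts := monotone_nat_of_le_succ P.mono

lemma pts_mem {i : ℕ} (hi : i ≤ P.n) : P.pts i ∈ Set.Icc a b :=
  ⟨P.first.symm.trans_le (P.pts_monotone (Nat.zero_le i)),
    (P.pts_monotone hi).trans_eq P.last⟩

lemma sum_abs_sub_le_totalVar {u : ℝ → ℝ} (hu : BoundedVariationOn u (Set.Icc a b)) :
    ∑ i ∈ range P.n, |u (P.pts (i + 1)) - u (P.pts i)| ≤ totalVar u a b := by
  have hsum := eVariationOn.sum_le_of_monotoneOn_Iic (f := u)
    (P.pts_monotone.monotoneOn _) fun _ hi => P.pts_mem hi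
  calc ∑ i ∈ range P.n, |u (P.pts (i + 1)) - u (P.pts i)|
      = (∑ i ∈ range P.n, edist (u (P.pts (i + 1))) (u (P.pts i))).toReal := by
        rw [ENNReal.toReal_sum fun _ _ => edist_ne_top _ _]
        simp only [← dist_edist, Real.dist_eq]
    _ ≤ totalVar u a b := ENNReal.toReal_mono hu hsum

end TaggedPartition

lemma sum_range_ite_mul_sub (v : ℕ → ℝ) (α β : ℝ) {N M : ℕ} (hNM : N ≤ M) :
    ∑ i ∈ range M, (if i < N then α else β) * (v (i + 1) - v i) =
      α * (v N - v 0) + β * (v M - v N) := by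
  have hlow : ∀ i ∈ range N, (if i < N then α else β) * (v (i + 1) - v i) =
      α * (v (i + 1) - v i) := fun i hi => by rw [if_pos (mem_range.mp hi)]
  have hhigh : ∀ i ∈ Ico N M, (if i < N then α else β) * (v (i + 1) - v i) =
      β * (v (i + 1) - v i) := fun i hi => by rw [if_neg (mem_Ico.mp hi).1.not_gt]
  rw [← sum_range_add_sum_Ico _ hNM, sum_congr rfl hlow, sum_congr rfl hhigh,
    ← mul_sum, ← mul_sum, sum_Ico_eq_sub _ hNM, sum_range_sub, sum_range_sub]
  ring

lemma abs_sum_mul_le_mul_sum_abs {n : ℕ} {c d : ℕ → ℝ} {C : ℝ} (hc : ∀ i < n, |c i| ≤ C) :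
    |∑ i ∈ range n, c i * d i| ≤ C * ∑ i ∈ range n, |d i| := by
  rw [mul_sum]
  refine (abs_sum_le_sum_abs _ _).trans (sum_le_sum fun i hi => ?_)
  rw [abs_mul]
  exact mul_le_mul_of_nonneg_right (hc i (mem_range.mp hi)) (abs_nonneg _)

lemma abs_RSsum_sub_step_le {a b : ℝ} (f u : ℝ → ℝ) (hu : BoundedVariationOn u (Set.Icc a b))
    (P : TaggedPartition a b) {N : ℕ} (hN : N ≤ P.n) {α β C : ℝ}
    (hα : ∀ t ∈ Set.Icc a (P.pts N), |f t - α| ≤ C)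
    (hβ : ∀ t ∈ Set.Icc (P.pts N) b, |f t - β| ≤ C) :
    |RSsum f u P - α * (u (P.pts N) - u a) - β * (u b - u (P.pts N))| ≤ C * totalVar u a b := by
  have hstep := sum_range_ite_mul_sub (u ∘ P.pts) α β hN
  simp only [Function.comp_apply, P.first, P.last] at hstep
  have hdiff : RSsum f u P - α * (u (P.pts N) - u a) - β * (u b - u (P.pts N)) =
      ∑ i ∈ range P.n, (f (P.tag i) - if i < N then α else β) *
        (u (P.pts (i + 1)) - u (P.pts i)) := by
    rw [sub_sub, ← hstep, RSsum, ← sum_sub_distrib]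
    exact sum_congr rfl fun i _ => by ring
  have htag : ∀ i < P.n, |f (P.tag i) - if i < N then α else β| ≤ C := by
    intro i hi
    have hξ := P.tag_mem i
    have hξab := P.pts_mem hi.le
    split_ifs with hiN
    · exact hα _ ⟨hξab.1.trans hξ.1, hξ.2.trans (P.pts_monotone hiN)⟩
    · exact hβ _ ⟨(P.pts_monotone (not_lt.mp hiN)).trans hξ.1,
        hξ.2.trans (P.pts_mem (Nat.succ_le_of_lt hi)).2⟩
  have hC : 0 ≤ C := (abs_nonneg _).trans (hα a ⟨le_rfl, (P.pts_mem hN).1⟩)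
  rw [hdiff]
  exact (abs_sum_mul_le_mul_sum_abs htag).trans
    (mul_le_mul_of_nonneg_left (P.sum_abs_sub_le_totalVar hu) hC)

lemma abs_sub_le_of_isRSIntegral {f u : ℝ → ℝ} {a b I S C : ℝ} (hI : IsRSIntegral f u a b I)
    (hP : ∀ δ > 0, ∃ P : TaggedPartition a b,
      (∀ i < P.n, P.pts (i + 1) - P.pts i < δ) ∧ |RSsum f u P - S| ≤ C) :
    |I - S| ≤ C := by
  refine le_of_forall_pos_lt_add fun ε hε => ?_
  obtain ⟨δ, hδ, hfine⟩ := hI ε hε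
  obtain ⟨P, hmesh, hS⟩ := hP δ hδ
  calc |I - S| ≤ |I - RSsum f u P| + |RSsum f u P - S| := abs_sub_le _ _ _
    _ < C + ε := by rw [abs_sub_comm]; linarith [hfine P hmesh]

/-- The grid `a, a + h, …, a + n h = b, b, b, …` with `h = (b - a) / n`. -/
noncomputable def uniformGrid (a b : ℝ) (n i : ℕ) : ℝ :=
  a + (min i n : ℕ) * ((b - a) / n)

lemma uniformGrid_of_le {a b : ℝ} {n i : ℕ} (hi : i ≤ n) :
    uniformGrid a b n i = a + i * ((b - a) / n) := by
  rw [uniformGrid, min_eq_left hi]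

lemma uniformGrid_succ_sub {a b : ℝ} {n i : ℕ} (hi : i < n) :
    uniformGrid a b n (i + 1) - uniformGrid a b n i = (b - a) / n := by
  rw [uniformGrid_of_le hi, uniformGrid_of_le hi.le]
  push_cast
  ring

lemma uniformGrid_mono {a b : ℝ} (hab : a ≤ b) (n i : ℕ) :
    uniformGrid a b n i ≤ uniformGrid a b n (i + 1) := by
  unfold uniformGrid
  gcongr
  exact Nat.le_succ i

noncomputable def uniformPartition {a b : ℝ} (hab : a ≤ b) (n : ℕ) (hn : n ≠ 0) :
    TaggedPartition a b where
  n := n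
  pts := uniformGrid a b n
  tag := uniformGrid a b n
  mono := uniformGrid_mono hab n
  first := by simp [uniformGrid]
  last := by
    rw [uniformGrid_of_le le_rfl]
    field_simp
    ring
  tag_mem i := ⟨le_rfl, uniformGrid_mono hab n i⟩

lemma exists_taggedPartition_midpoint_node_mesh_lt {a b δ : ℝ} (hab : a ≤ b) (hδ : 0 < δ) :
    ∃ (P : TaggedPartition a b) (N : ℕ), N ≤ P.n ∧ P.pts N = (a + b) / 2 ∧
      ∀ i < P.n, P.pts (i + 1) - P.pts i < δ := by
  obtain ⟨N, hN⟩ := exists_nat_gt ((b - a) / (2 * δ))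
  have hba : b - a < 2 * N * δ := by
    rw [div_lt_iff₀ (by positivity)] at hN
    linarith
  have hN0 : N ≠ 0 := by
    rintro rfl
    simp only [Nat.cast_zero, mul_zero, zero_mul] at hba
    linarith
  refine ⟨uniformPartition hab (2 * N) (by omega), N, by change N ≤ 2 * N; omega, ?_, ?_⟩
  · change uniformGrid a b (2 * N) N = (a + b) / 2
    rw [uniformGrid_of_le (by omega)]
    push_cast
    field_simp
    ring
  · intro i hi
    change uniformGrid a b (2 * N) (i + 1) - uniformGrid a b (2 * N) i < δ
    rw [uniformGrid_succ_sub (show i < 2 * N from hi), div_lt_iff₀ (by positivity)]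
    push_cast
    linarith

lemma abs_sub_le_of_mem_Icc_center {c ρ t y : ℝ} (ht : t ∈ Set.Icc (c - ρ) (c + ρ)) :
    |t - y| ≤ ρ + |y - c| := by
  have htc : |t - c| ≤ ρ := abs_sub_le_iff.mpr ⟨by linarith [ht.2], by linarith [ht.1]⟩
  calc |t - y| ≤ |t - c| + |c - y| := abs_sub_le _ _ _
    _ ≤ ρ + |y - c| := by rw [abs_sub_comm c]; linarith

lemma abs_sub_le_of_holder {s : Set ℝ} {f : ℝ → ℝ} {H r K : ℝ} (hr : 0 < r) (hH : 0 ≤ H)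
    (hf : ∀ s₁ ∈ s, ∀ s₂ ∈ s, |f s₁ - f s₂| ≤ H * |s₁ - s₂| ^ r)
    {t y : ℝ} (ht : t ∈ s) (hy : y ∈ s) (hK : |t - y| ≤ K) :
    |f t - f y| ≤ H * K ^ r :=
  (hf t ht y hy).trans <|
    mul_le_mul_of_nonneg_left (Real.rpow_le_rpow (abs_nonneg _) hK hr.le) hH

theorem two_point_midpoint_bounded_variation_general
    (a b H r y I : ℝ) (f u : ℝ → ℝ)
    (hr : 0 < r) (hH : 0 ≤ H)
    (hf : ∀ s ∈ Set.Icc a b, ∀ t ∈ Set.Icc a b, |f s - f t| ≤ H * |s - t| ^ r)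
    (hu : BoundedVariationOn u (Set.Icc a b))
    (hy : y ∈ Set.Icc a ((a + b) / 2))
    (hI : IsRSIntegral f u a b I) :
    |I - (u ((a + b) / 2) - u a) * f y - (u b - u ((a + b) / 2)) * f (a + b - y)| ≤
      H * ((b - a) / 4 + |y - (3 * a + b) / 4|) ^ r * totalVar u a b := by
  obtain ⟨hay, hym⟩ := hy
  have hab : a ≤ b := by linarith
  set K := (b - a) / 4 + |y - (3 * a + b) / 4|
  have hleft : ∀ t ∈ Set.Icc a ((a + b) / 2), |f t - f y| ≤ H * K ^ r := fun t ht =>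
    abs_sub_le_of_holder hr hH hf ⟨ht.1, by linarith [ht.2]⟩ ⟨hay, by linarith⟩
      (abs_sub_le_of_mem_Icc_center ⟨by linarith [ht.1], by linarith [ht.2]⟩)
  have hright : ∀ t ∈ Set.Icc ((a + b) / 2) b, |f t - f (a + b - y)| ≤ H * K ^ r := fun t ht =>
    abs_sub_le_of_holder hr hH hf ⟨by linarith [ht.1], ht.2⟩ ⟨by linarith, by linarith⟩ <| by
      rw [abs_sub_comm, show a + b - y - t = a + b - t - y by ring]
      exact abs_sub_le_of_mem_Icc_center ⟨by linarith [ht.2], by linarith [ht.1]⟩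
  rw [sub_sub]
  refine abs_sub_le_of_isRSIntegral hI fun δ hδ => ?_
  obtain ⟨P, N, hN, hPN, hmesh⟩ := exists_taggedPartition_midpoint_node_mesh_lt hab hδ
  refine ⟨P, hmesh, ?_⟩
  have hstep := abs_RSsum_sub_step_le f u hu P hN (hPN ▸ hleft) (hPN ▸ hright)
  rw [hPN] at hstep
  convert hstep using 2
  ring

theorem two_point_midpoint_bounded_variation
    (a b H r y I : ℝ) (f u : ℝ → ℝ)
    (hr : 0 < r) (hr1 : r ≤ 1) (hH : 0 ≤ H)
    (hf : ∀ s ∈ Set.Icc a b, ∀ t ∈ Set.Icc a b, |f s - f t| ≤ H * |s - t| ^ r)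
    (hu : BoundedVariationOn u (Set.Icc a b))
    (hy : y ∈ Set.Icc a ((a + b) / 2))
    (hI : IsRSIntegral f u a b I) :
    |I - (u ((a + b) / 2) - u a) * f y - (u b - u ((a + b) / 2)) * f (a + b - y)| ≤
      H * ((b - a) / 4 + |y - (3 * a + b) / 4|) ^ r * totalVar u a b :=
  two_point_midpoint_bounded_variation_general a b H r y I f u hr hH hf hu hy hI
end

section
/- Let 1 < p < ∞, let f : [a,b] → ℝ be Hölder continuous of order r ∈ (0,1] with constant H, and let u : [a,b] → ℝ be Lipschitz with constant L. Then for all a ≤ t₀ ≤ x ≤ t₁ ≤ b, |∫ₐᵇ f du − [u(x) − u(a)]·f(t₀) − [u(b) − u(x)]·f(t₁)| ≤ H·L·[ (x−a)^{1−1/p} · ( ((t₀−a)^{rp+1} + (x−t₀)^{rp+1}) / (rp+1) )^{1/p} + (b−x)^{1−1/p} · ( ((t₁−x)^{rp+1} + (b−t₁)^{rp+1}) / (rp+1) )^{1/p} ]. -/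
/-! On a partition of `[a, x]` whose tags `ξᵢ` are mean-value points of `τ ↦ |τ - t₀| ^ (r p)`
on cells of lengths `Δᵢ`, the Riemann–Stieltjes sum differs from `(u x - u a) f t₀` by at most
`H L ∑ Δᵢ |ξᵢ - t₀| ^ r`. Weighted Hölder bounds this by
`H L (x - a) ^ (1 - 1/p) (∑ Δᵢ |ξᵢ - t₀| ^ (r p)) ^ (1/p)`, and by the choice of tags the last sum
is exactly `∫ₐˣ |τ - t₀| ^ (r p)`, which is computed in closed form. The same on `[x, b]`, with the
two partitions concatenated, gives arbitrarily fine partitions of `[a, b]` whose sums obey the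
bound, and it passes to the limit `I`. -/

open Set Finset intervalIntegral

theorem continuous_abs_sub_rpow (t : ℝ) {e : ℝ} (he : 0 ≤ e) :
    Continuous fun τ : ℝ => |τ - t| ^ e :=
  (continuous_id.sub continuous_const).abs.rpow_const fun _ => Or.inr he

theorem integral_abs_sub_rpow {e : ℝ} (he : 0 ≤ e) {c t d : ℝ} (hct : c ≤ t) (htd : t ≤ d) :
    ∫ τ in c..d, |τ - t| ^ e = ((t - c) ^ (e + 1) + (d - t) ^ (e + 1)) / (e + 1) := by
  have hint : ∀ c d, IntervalIntegrable (fun τ : ℝ => |τ - t| ^ e) MeasureTheory.volume c d :=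
    fun _ _ => (continuous_abs_sub_rpow t he).intervalIntegrable _ _
  have he1 : e + 1 ≠ 0 := by positivity
  have hleft : ∫ τ in c..t, |τ - t| ^ e = (t - c) ^ (e + 1) / (e + 1) := by
    rw [integral_congr (g := fun τ => (t - τ) ^ e) fun τ hτ => by
        rw [uIcc_of_le hct] at hτ
        rw [abs_sub_comm, abs_of_nonneg (by linarith [hτ.2])],
      integral_comp_sub_left (fun y => y ^ e) t, sub_self,
      integral_rpow (Or.inl (by linarith)), Real.zero_rpow he1, sub_zero]
  have hright : ∫ τ in t..d, |τ - t| ^ e = (d - t) ^ (e + 1) / (e + 1) := by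
    rw [integral_congr (g := fun τ => (τ - t) ^ e) fun τ hτ => by
        rw [uIcc_of_le htd] at hτ
        rw [abs_of_nonneg (by linarith [hτ.1])],
      integral_comp_sub_right (fun y => y ^ e) t, sub_self,
      integral_rpow (Or.inl (by linarith)), Real.zero_rpow he1, sub_zero]
  rw [← integral_add_adjacent_intervals (hint c t) (hint t d), hleft, hright, add_div]

theorem exists_mem_Icc_mul_eq_integral {g : ℝ → ℝ} (hg : Continuous g) {c d : ℝ} (hcd : c ≤ d) :
    ∃ ξ ∈ Icc c d, (d - c) * g ξ = ∫ τ in c..d, g τ := by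
  obtain ⟨ξ, hξ, h⟩ := exists_eq_const_mul_intervalIntegral_of_nonneg (g := fun _ => (1 : ℝ))
    (μ := MeasureTheory.volume) hg.continuousOn intervalIntegrable_const fun _ _ => zero_le_one
  refine ⟨ξ, uIcc_of_le hcd ▸ hξ, ?_⟩
  simpa [mul_comm] using h.symm

namespace TaggedPartition

variable {a b c : ℝ}

theorem monotone_pts (P : TaggedPartition a b) : Monotone P.pts :=
  monotone_nat_of_le_succ P.mono

theorem pts_mem_Icc (P : TaggedPartition a b) {i : ℕ} (hi : i ≤ P.n) : P.pts i ∈ Icc a b :=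
  ⟨P.first.symm.trans_le (P.monotone_pts i.zero_le), (P.monotone_pts hi).trans_eq P.last⟩

theorem tag_mem_Icc (P : TaggedPartition a b) {i : ℕ} (hi : i < P.n) : P.tag i ∈ Icc a b :=
  ⟨(P.pts_mem_Icc hi.le).1.trans (P.tag_mem i).1, (P.tag_mem i).2.trans (P.pts_mem_Icc hi).2⟩

theorem sum_pts_succ_sub (P : TaggedPartition a b) (u : ℝ → ℝ) :
    ∑ i ∈ range P.n, (u (P.pts (i + 1)) - u (P.pts i)) = u b - u a := by
  rw [sum_range_sub (fun i => u (P.pts i)), P.last, P.first]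

theorem exists_mesh_lt_mul_eq_integral {g : ℝ → ℝ} (hg : Continuous g) (hab : a ≤ b) {δ : ℝ}
    (hδ : 0 < δ) :
    ∃ P : TaggedPartition a b, (∀ i < P.n, P.pts (i + 1) - P.pts i < δ) ∧
      ∀ i < P.n, (P.pts (i + 1) - P.pts i) * g (P.tag i) = ∫ τ in P.pts i..P.pts (i + 1), g τ := by
  obtain ⟨n, hn⟩ := exists_nat_gt ((b - a) / δ)
  have hn0 : (0 : ℝ) < n := (div_nonneg (sub_nonneg.2 hab) hδ.le).trans_lt hn
  set Δ := (b - a) / n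
  have hΔ : 0 ≤ Δ := div_nonneg (sub_nonneg.2 hab) hn0.le
  have hΔδ : Δ < δ := by rwa [div_lt_iff₀ hn0, mul_comm, ← div_lt_iff₀ hδ]
  have hstep : ∀ i : ℕ, (a + ((i + 1 : ℕ) : ℝ) * Δ) - (a + i * Δ) = Δ := fun i => by
    push_cast; ring
  have hmono : ∀ i : ℕ, a + i * Δ ≤ a + ((i + 1 : ℕ) : ℝ) * Δ := fun i => by linarith [hstep i]
  choose ξ hξ hξg using fun i => exists_mem_Icc_mul_eq_integral hg (hmono i)
  refine ⟨⟨n, fun i => a + i * Δ, ξ, hmono, by simp, by rw [mul_div_cancel₀ _ hn0.ne']; ring, hξ⟩,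
    fun i _ => (hstep i).trans_lt hΔδ, fun i _ => hξg i⟩

theorem abs_RSsum_sub_le (P : TaggedPartition a b) {f u : ℝ → ℝ} {H L r t : ℝ}
    (hf : ∀ s ∈ Icc a b, ∀ t ∈ Icc a b, |f s - f t| ≤ H * |s - t| ^ r)
    (hu : ∀ s ∈ Icc a b, ∀ t ∈ Icc a b, |u s - u t| ≤ L * |s - t|) (ht : t ∈ Icc a b) :
    |RSsum f u P - (u b - u a) * f t| ≤
      H * L * ∑ i ∈ range P.n, (P.pts (i + 1) - P.pts i) * |P.tag i - t| ^ r := by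
  have hsplit : RSsum f u P - (u b - u a) * f t =
      ∑ i ∈ range P.n, (f (P.tag i) - f t) * (u (P.pts (i + 1)) - u (P.pts i)) := by
    rw [RSsum, ← P.sum_pts_succ_sub u, sum_mul, ← sum_sub_distrib]
    exact sum_congr rfl fun i _ => by ring
  have hterm : ∀ i ∈ range P.n, |(f (P.tag i) - f t) * (u (P.pts (i + 1)) - u (P.pts i))| ≤
      H * L * ((P.pts (i + 1) - P.pts i) * |P.tag i - t| ^ r) := fun i hi => by
    have hi := mem_range.1 hi
    have hfi := hf _ (P.tag_mem_Icc hi) t ht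
    have hui := hu _ (P.pts_mem_Icc hi) _ (P.pts_mem_Icc hi.le)
    rw [abs_of_nonneg (sub_nonneg.2 (P.mono i))] at hui
    calc |(f (P.tag i) - f t) * (u (P.pts (i + 1)) - u (P.pts i))|
        ≤ H * |P.tag i - t| ^ r * (L * (P.pts (i + 1) - P.pts i)) := by
          rw [abs_mul]
          exact mul_le_mul hfi hui (abs_nonneg _) ((abs_nonneg _).trans hfi)
      _ = H * L * ((P.pts (i + 1) - P.pts i) * |P.tag i - t| ^ r) := by ring
  rw [hsplit, mul_sum]
  exact (abs_sum_le_sum_abs _ _).trans (sum_le_sum hterm)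

theorem sum_mul_abs_sub_rpow_le (P : TaggedPartition a b) {r p t : ℝ} (hr : 0 ≤ r) (hp : 1 ≤ p)
    (hat : a ≤ t) (htb : t ≤ b)
    (htag : ∀ i < P.n, (P.pts (i + 1) - P.pts i) * |P.tag i - t| ^ (r * p) =
      ∫ τ in P.pts i..P.pts (i + 1), |τ - t| ^ (r * p)) :
    ∑ i ∈ range P.n, (P.pts (i + 1) - P.pts i) * |P.tag i - t| ^ r ≤
      (b - a) ^ (1 - 1 / p) *
        (((t - a) ^ (r * p + 1) + (b - t) ^ (r * p + 1)) / (r * p + 1)) ^ (1 / p) := by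
  have hrp : 0 ≤ r * p := mul_nonneg hr (zero_le_one.trans hp)
  have hpow : ∑ i ∈ range P.n, (P.pts (i + 1) - P.pts i) * (|P.tag i - t| ^ r) ^ p =
      ∫ τ in a..b, |τ - t| ^ (r * p) := by
    rw [sum_congr rfl fun i hi => by rw [← Real.rpow_mul (abs_nonneg _), htag i (mem_range.1 hi)],
      sum_integral_adjacent_intervals fun k _ =>
        (continuous_abs_sub_rpow t hrp).intervalIntegrable _ _, P.first, P.last]
  have hholder := Real.inner_le_weight_mul_Lp_of_nonneg (range P.n) hp _ (fun i => |P.tag i - t| ^ r)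
    (fun i => sub_nonneg.2 (P.mono i)) fun i => by positivity
  have hlen : ∑ i ∈ range P.n, (P.pts (i + 1) - P.pts i) = b - a := P.sum_pts_succ_sub id
  rwa [hlen, hpow, integral_abs_sub_rpow hrp hat htb, ← one_div] at hholder

theorem exists_mesh_lt_abs_RSsum_sub_le {f u : ℝ → ℝ} {H L r p t δ : ℝ} (hH : 0 ≤ H) (hL : 0 ≤ L)
    (hr : 0 ≤ r) (hp : 1 ≤ p)
    (hf : ∀ s ∈ Icc a b, ∀ t ∈ Icc a b, |f s - f t| ≤ H * |s - t| ^ r)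
    (hu : ∀ s ∈ Icc a b, ∀ t ∈ Icc a b, |u s - u t| ≤ L * |s - t|) (hat : a ≤ t) (htb : t ≤ b)
    (hδ : 0 < δ) :
    ∃ P : TaggedPartition a b, (∀ i < P.n, P.pts (i + 1) - P.pts i < δ) ∧
      |RSsum f u P - (u b - u a) * f t| ≤ H * L * ((b - a) ^ (1 - 1 / p) *
        (((t - a) ^ (r * p + 1) + (b - t) ^ (r * p + 1)) / (r * p + 1)) ^ (1 / p)) := by
  obtain ⟨P, hmesh, htag⟩ := exists_mesh_lt_mul_eq_integral
    (continuous_abs_sub_rpow t (mul_nonneg hr (zero_le_one.trans hp))) (hat.trans htb) hδ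
  exact ⟨P, hmesh, (P.abs_RSsum_sub_le hf hu ⟨hat, htb⟩).trans <|
    mul_le_mul_of_nonneg_left (P.sum_mul_abs_sub_rpow_le hr hp hat htb htag) (mul_nonneg hH hL)⟩

def append (P : TaggedPartition a b) (Q : TaggedPartition b c) : TaggedPartition a c where
  n := P.n + Q.n
  pts i := if i < P.n then P.pts i else Q.pts (i - P.n)
  tag i := if i < P.n then P.tag i else Q.tag (i - P.n)
  mono i := by
    split_ifs with hi hi'
    · exact P.mono i
    · rw [show i + 1 - P.n = 0 by omega, Q.first]
      exact (P.pts_mem_Icc hi.le).2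
    · omega
    · rw [show i + 1 - P.n = i - P.n + 1 by omega]
      exact Q.mono _
  first := by
    split_ifs with h
    · exact P.first
    · rw [Nat.zero_sub, Q.first, ← P.last, show P.n = 0 by omega, P.first]
  last := by simp [Q.last]
  tag_mem i := by
    split_ifs with hi hi' hi'
    · exact P.tag_mem i
    · rw [show i + 1 - P.n = 0 by omega, Q.first]
      exact ⟨(P.tag_mem i).1, (P.tag_mem_Icc hi).2⟩
    · omega
    · rw [show i + 1 - P.n = i - P.n + 1 by omega]
      exact Q.tag_mem _

theorem append_pts_of_le (P : TaggedPartition a b) (Q : TaggedPartition b c) {i : ℕ}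
    (hi : i ≤ P.n) : (P.append Q).pts i = P.pts i := by
  change (if i < P.n then P.pts i else Q.pts (i - P.n)) = P.pts i
  split_ifs with h
  · rfl
  · obtain rfl : i = P.n := by omega
    rw [Nat.sub_self, Q.first, P.last]

theorem append_pts_add (P : TaggedPartition a b) (Q : TaggedPartition b c) (i : ℕ) :
    (P.append Q).pts (P.n + i) = Q.pts i := by
  change (if P.n + i < P.n then P.pts (P.n + i) else Q.pts (P.n + i - P.n)) = Q.pts i
  rw [if_neg (by omega), Nat.add_sub_cancel_left]

theorem append_tag_of_lt (P : TaggedPartition a b) (Q : TaggedPartition b c) {i : ℕ}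
    (hi : i < P.n) : (P.append Q).tag i = P.tag i :=
  if_pos hi

theorem append_tag_add (P : TaggedPartition a b) (Q : TaggedPartition b c) (i : ℕ) :
    (P.append Q).tag (P.n + i) = Q.tag i := by
  change (if P.n + i < P.n then P.tag (P.n + i) else Q.tag (P.n + i - P.n)) = Q.tag i
  rw [if_neg (by omega), Nat.add_sub_cancel_left]

theorem append_mesh_lt {P : TaggedPartition a b} {Q : TaggedPartition b c} {δ : ℝ}
    (hP : ∀ i < P.n, P.pts (i + 1) - P.pts i < δ) (hQ : ∀ i < Q.n, Q.pts (i + 1) - Q.pts i < δ) :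
    ∀ i < (P.append Q).n, (P.append Q).pts (i + 1) - (P.append Q).pts i < δ := by
  intro i hi
  rcases lt_or_ge i P.n with h | h
  · rw [append_pts_of_le P Q h, append_pts_of_le P Q h.le]
    exact hP i h
  · obtain ⟨k, rfl⟩ := Nat.exists_eq_add_of_le h
    rw [add_assoc, append_pts_add, append_pts_add]
    exact hQ k (by change P.n + k < P.n + Q.n at hi; omega)

theorem RSsum_append (f u : ℝ → ℝ) (P : TaggedPartition a b) (Q : TaggedPartition b c) :
    RSsum f u (P.append Q) = RSsum f u P + RSsum f u Q := by
  change ∑ i ∈ range (P.n + Q.n), _ = _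
  rw [sum_range_add]
  congr 1
  · refine sum_congr rfl fun i hi => ?_
    have hi := mem_range.1 hi
    rw [append_tag_of_lt P Q hi, append_pts_of_le P Q hi, append_pts_of_le P Q hi.le]
  · refine sum_congr rfl fun i _ => ?_
    rw [append_tag_add, add_assoc, append_pts_add, append_pts_add]

end TaggedPartition

theorem two_point_quadrature_Lp_lipschitz_general
    (a b H L r p t0 x t1 I : ℝ) (f u : ℝ → ℝ)
    (hp : 1 < p) (hr : 0 < r) (hH : 0 ≤ H) (hL : 0 ≤ L)
    (hf : ∀ s ∈ Set.Icc a b, ∀ t ∈ Set.Icc a b, |f s - f t| ≤ H * |s - t| ^ r)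
    (hu : ∀ s ∈ Set.Icc a b, ∀ t ∈ Set.Icc a b, |u s - u t| ≤ L * |s - t|)
    (ht0 : a ≤ t0) (ht0x : t0 ≤ x) (hxt1 : x ≤ t1) (ht1 : t1 ≤ b)
    (hI : IsRSIntegral f u a b I) :
    |I - (u x - u a) * f t0 - (u b - u x) * f t1| ≤
      H * L * ((x - a) ^ (1 - 1 / p) *
          (((t0 - a) ^ (r * p + 1) + (x - t0) ^ (r * p + 1)) / (r * p + 1)) ^ (1 / p) +
        (b - x) ^ (1 - 1 / p) *
          (((t1 - x) ^ (r * p + 1) + (b - t1) ^ (r * p + 1)) / (r * p + 1)) ^ (1 / p)) := by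
  have hleft : Icc a x ⊆ Icc a b := Icc_subset_Icc le_rfl (hxt1.trans ht1)
  have hright : Icc x b ⊆ Icc a b := Icc_subset_Icc (ht0.trans ht0x) le_rfl
  refine le_of_forall_pos_le_add fun ε hε => ?_
  obtain ⟨δ, hδ, hRS⟩ := hI ε hε
  obtain ⟨P, hPδ, hP⟩ := TaggedPartition.exists_mesh_lt_abs_RSsum_sub_le hH hL hr.le hp.le
    (fun s hs t ht => hf s (hleft hs) t (hleft ht)) (fun s hs t ht => hu s (hleft hs) t (hleft ht))
    ht0 ht0x hδ
  obtain ⟨Q, hQδ, hQ⟩ := TaggedPartition.exists_mesh_lt_abs_RSsum_sub_le hH hL hr.le hp.le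
    (fun s hs t ht => hf s (hright hs) t (hright ht))
    (fun s hs t ht => hu s (hright hs) t (hright ht)) hxt1 ht1 hδ
  have hPQ := hRS _ (TaggedPartition.append_mesh_lt hPδ hQδ)
  rw [TaggedPartition.RSsum_append] at hPQ
  rw [mul_add]
  obtain ⟨hP₁, hP₂⟩ := abs_le.1 hP
  obtain ⟨hQ₁, hQ₂⟩ := abs_le.1 hQ
  obtain ⟨hPQ₁, hPQ₂⟩ := abs_lt.1 hPQ
  exact abs_le.2 ⟨by linarith, by linarith⟩

theorem two_point_quadrature_Lp_lipschitz
    (a b H L r p t0 x t1 I : ℝ) (f u : ℝ → ℝ)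
    (hp : 1 < p) (hr : 0 < r) (hr1 : r ≤ 1) (hH : 0 ≤ H) (hL : 0 ≤ L)
    (hf : ∀ s ∈ Set.Icc a b, ∀ t ∈ Set.Icc a b, |f s - f t| ≤ H * |s - t| ^ r)
    (hu : ∀ s ∈ Set.Icc a b, ∀ t ∈ Set.Icc a b, |u s - u t| ≤ L * |s - t|)
    (ht0 : a ≤ t0) (ht0x : t0 ≤ x) (hxt1 : x ≤ t1) (ht1 : t1 ≤ b)
    (hI : IsRSIntegral f u a b I) :
    |I - (u x - u a) * f t0 - (u b - u x) * f t1| ≤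
      H * L * ((x - a) ^ (1 - 1 / p) *
          (((t0 - a) ^ (r * p + 1) + (x - t0) ^ (r * p + 1)) / (r * p + 1)) ^ (1 / p) +
        (b - x) ^ (1 - 1 / p) *
          (((t1 - x) ^ (r * p + 1) + (b - t1) ^ (r * p + 1)) / (r * p + 1)) ^ (1 / p)) :=
  two_point_quadrature_Lp_lipschitz_general a b H L r p t0 x t1 I f u hp hr hH hL hf hu ht0 ht0x
    hxt1 ht1 hI
end
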